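/- arXiv:1810.08907 — 3 statements merged into one kernel-verified Lean document; each statement's English description precedes it below -/
import Mathlib

section
/- Let f : ℝⁿ → ℝ be convex with L-Lipschitz gradient, and let 0 < s ≤ 1/L. Then for all x, y ∈ ℝⁿ, f(x - s∇f(x)) ≤ f(y) + ⟨∇f(x), x - y⟩ - (s/2)‖∇f(x)‖² - (s/2)‖∇f(x) - ∇f(y)‖². -/
/-!
A gradient step of length `s ≤ 1/L` decreases `f` by at least `(s/2)‖∇f x‖²`: this is the
descent lemma `f b ≤ f a + ⟪∇f a, b - a⟫ + (L/2)‖b - a‖²`, obtained by comparing derivatives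
along the segment `[a, b]` with the Lipschitz bound on `∇f`. Applied to the convex function
`z ↦ f z - ⟪∇f x, z⟫`, which is minimized at `x`, the descent lemma yields the cocoercive lower
bound `f y ≥ f x + ⟪∇f x, y - x⟫ + ‖∇f x - ∇f y‖² / (2L)`. Adding the two bounds and using
`s ≤ 1/L` gives the claim.
-/

open scoped RealInnerProductSpace

variable {E : Type*} [NormedAddCommGroup E] [InnerProductSpace ℝ E] [CompleteSpace E]
  {f : E → ℝ} {g : E → E} {g' : E} {L : ℝ}

theorem HasGradientAt.hasDerivAt_comp_add_smul {a v : E} {t : ℝ}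
    (hf : HasGradientAt f g' (a + t • v)) :
    HasDerivAt (fun t : ℝ => f (a + t • v)) ⟪g', v⟫ t := by
  have hline : HasDerivAt (fun t : ℝ => a + t • v) v t := by
    simpa using ((hasDerivAt_id t).smul_const v).const_add a
  simpa [Function.comp_def] using hf.hasFDerivAt.comp_hasDerivAt t hline

theorem ConvexOn.add_inner_le_of_hasGradientAt (hconv : ConvexOn ℝ Set.univ f) {a : E}
    (hf : HasGradientAt f g' a) (b : E) : f a + ⟪g', b - a⟫ ≤ f b := by
  have hline : ConvexOn ℝ Set.univ (fun t : ℝ => f (a + t • (b - a))) := by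
    simpa [Function.comp_def, AffineMap.lineMap_apply, add_comm] using
      hconv.comp_affineMap (AffineMap.lineMap a b)
  have hslope := hline.le_slope_of_hasDerivAt (Set.mem_univ 0) (Set.mem_univ 1) one_pos
    (HasGradientAt.hasDerivAt_comp_add_smul (by simpa using hf))
  simp only [slope_def_field, one_smul, add_sub_cancel, zero_smul, add_zero, sub_zero, div_one]
    at hslope
  linarith

theorem apply_le_add_inner_add_sq_norm_of_lipschitz_gradient
    (hgrad : ∀ x, HasGradientAt f (g x) x) (hlip : ∀ x y, ‖g x - g y‖ ≤ L * ‖x - y‖) (a b : E) :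
    f b ≤ f a + ⟪g a, b - a⟫ + L / 2 * ‖b - a‖ ^ 2 := by
  set v := b - a
  let H : ℝ → ℝ := fun t => f (a + t • v) - t * ⟪g a, v⟫ - L / 2 * ‖v‖ ^ 2 * t ^ 2
  have hH : ∀ t, HasDerivAt H (⟪g (a + t • v) - g a, v⟫ - L * t * ‖v‖ ^ 2) t := by
    intro t
    refine ((((hgrad _).hasDerivAt_comp_add_smul).sub (hasDerivAt_mul_const ⟪g a, v⟫)).sub
      ((hasDerivAt_pow 2 t).const_mul (L / 2 * ‖v‖ ^ 2))).congr_deriv ?_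
    rw [inner_sub_left]; push_cast; ring
  have hH_nonpos :
      ∀ t ∈ interior (Set.Ici (0 : ℝ)), ⟪g (a + t • v) - g a, v⟫ - L * t * ‖v‖ ^ 2 ≤ 0 := by
    intro t ht
    rw [interior_Ici, Set.mem_Ioi] at ht
    have hstep : ‖g (a + t • v) - g a‖ ≤ L * (t * ‖v‖) := by
      simpa [norm_smul, abs_of_pos ht] using hlip (a + t • v) a
    nlinarith [real_inner_le_norm (g (a + t • v) - g a) v, norm_nonneg v]
  have hanti := antitoneOn_of_hasDerivWithinAt_nonpos (convex_Ici 0)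
    (fun t _ => (hH t).continuousAt.continuousWithinAt) (fun t _ => (hH t).hasDerivWithinAt)
    hH_nonpos
  have hH0 : H 0 = f a := by simp [H]
  have hH1 : H 1 = f b - ⟪g a, v⟫ - L / 2 * ‖v‖ ^ 2 := by simp [H, v]
  have h10 := hanti (Set.mem_Ici.2 le_rfl) (Set.mem_Ici.2 zero_le_one) zero_le_one
  rw [hH0, hH1] at h10
  linarith

theorem apply_sub_smul_le_of_lipschitz_gradient
    (hgrad : ∀ x, HasGradientAt f (g x) x) (hlip : ∀ x y, ‖g x - g y‖ ≤ L * ‖x - y‖)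
    (x : E) (s : ℝ) : f (x - s • g x) ≤ f x - s * (1 - L * s / 2) * ‖g x‖ ^ 2 := by
  have h := apply_le_add_inner_add_sq_norm_of_lipschitz_gradient hgrad hlip x (x - s • g x)
  rw [sub_sub_cancel_left, inner_neg_right, inner_smul_right, real_inner_self_eq_norm_sq,
    norm_neg, norm_smul, mul_pow, Real.norm_eq_abs, sq_abs] at h
  linarith

theorem IsMinOn.le_sub_sq_norm_of_lipschitz_gradient (hL : 0 < L)
    (hgrad : ∀ x, HasGradientAt f (g x) x) (hlip : ∀ x y, ‖g x - g y‖ ≤ L * ‖x - y‖)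
    {x : E} (hmin : IsMinOn f Set.univ x) (y : E) : f x ≤ f y - 1 / (2 * L) * ‖g y‖ ^ 2 := by
  have hstep := apply_sub_smul_le_of_lipschitz_gradient hgrad hlip y (1 / L)
  have hcoef : 1 / L * (1 - L * (1 / L) / 2) = 1 / (2 * L) := by field_simp; ring
  rw [hcoef] at hstep
  exact (hmin (Set.mem_univ _)).trans hstep

theorem ConvexOn.add_inner_add_sq_norm_sub_le_of_lipschitz_gradient (hL : 0 < L)
    (hconv : ConvexOn ℝ Set.univ f) (hgrad : ∀ x, HasGradientAt f (g x) x)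
    (hlip : ∀ x y, ‖g x - g y‖ ≤ L * ‖x - y‖) (x y : E) :
    f x + ⟪g x, y - x⟫ + 1 / (2 * L) * ‖g x - g y‖ ^ 2 ≤ f y := by
  let F : E → ℝ := fun z => f z - ⟪g x, z⟫
  have hgradF : ∀ z, HasGradientAt F (g z - g x) z := fun z => by
    rw [hasGradientAt_iff_hasFDerivAt, map_sub]
    exact (hgrad z).hasFDerivAt.sub (InnerProductSpace.toDual ℝ E (g x)).hasFDerivAt
  have hconvF : ConvexOn ℝ Set.univ F := hconv.sub ((innerₛₗ ℝ (g x)).concaveOn convex_univ)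
  have hlipF : ∀ u w, ‖(g u - g x) - (g w - g x)‖ ≤ L * ‖u - w‖ := fun u w => by
    rw [sub_sub_sub_cancel_right]; exact hlip u w
  have hmin : IsMinOn F Set.univ x := fun z _ => by
    simpa using hconvF.add_inner_le_of_hasGradientAt (hgradF x) z
  have h := hmin.le_sub_sq_norm_of_lipschitz_gradient hL hgradF hlipF y
  rw [norm_sub_rev, inner_sub_right]
  linarith

/-- Tightened descent inequality for L-smooth convex functions. -/
theorem nag_tight_descent {n : ℕ}
    (f : EuclideanSpace ℝ (Fin n) → ℝ)
    (g : EuclideanSpace ℝ (Fin n) → EuclideanSpace ℝ (Fin n))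
    (L s : ℝ) (hL : 0 < L)
    (hgrad : ∀ x, HasGradientAt f (g x) x)
    (hconv : ConvexOn ℝ Set.univ f)
    (hlip : ∀ x y, ‖g x - g y‖ ≤ L * ‖x - y‖)
    (hs : 0 < s) (hsL : s ≤ 1 / L) :
    ∀ x y, f (x - s • g x) ≤ f y + ⟪g x, x - y⟫
      - s / 2 * ‖g x‖ ^ 2 - s / 2 * ‖g x - g y‖ ^ 2 := by
  intro x y
  have hstep := apply_sub_smul_le_of_lipschitz_gradient hgrad hlip x s
  have hcoco := hconv.add_inner_add_sq_norm_sub_le_of_lipschitz_gradient hL hgrad hlip x y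
  have hLs : L * s ≤ 1 := by rwa [le_div_iff₀ hL, mul_comm] at hsL
  have hstep_gain : s / 2 * ‖g x‖ ^ 2 ≤ s * (1 - L * s / 2) * ‖g x‖ ^ 2 := by
    nlinarith [mul_nonneg (mul_nonneg hs.le (sub_nonneg.2 hLs)) (sq_nonneg ‖g x‖)]
  have hcoco_gain : s / 2 * ‖g x - g y‖ ^ 2 ≤ 1 / (2 * L) * ‖g x - g y‖ ^ 2 := by
    refine mul_le_mul_of_nonneg_right ?_ (sq_nonneg _)
    rw [mul_comm, ← div_div]; linarith
  have hinner : ⟪g x, x - y⟫ = -⟪g x, y - x⟫ := by rw [← inner_neg_right, neg_sub]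
  linarith
end

section
/- Let f : ℝⁿ → ℝ be twice continuously differentiable, μ-strongly convex with L-Lipschitz gradient (0 < μ ≤ L), with minimizer x⋆, and let s > 0. Suppose X : [0, ∞) → ℝⁿ is a C² solution of Ẍ + 2√μ·Ẋ + √s·∇²f(X)·Ẋ + (1+√(μs))∇f(X) = 0. Define E(t) = (1+√(μs))(f(X(t)) - f(x⋆)) + (1/4)‖Ẋ(t)‖² + (1/4)‖Ẋ(t) + 2√μ(X(t) - x⋆) + √s∇f(X(t))‖². Then for all t ≥ 0, dE/dt ≤ -(√μ/4)·E(t) - (√s/2)[‖∇f(X(t))‖² + ⟨Ẋ(t), ∇²f(X(t))Ẋ(t)⟩]. -/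
/-!
Differentiating `E` along the trajectory and eliminating `Ẍ` with the ODE gives
`Ė = -√μ‖Ẋ‖² - (√s/2)⟪Ẋ, ∇²f(X)Ẋ⟫ - (1 + √(μs))√μ⟪∇f(X), X - x⋆⟫ - (1 + √(μs))(√s/2)‖∇f(X)‖²`.
Strong convexity bounds `⟪∇f(X), X - x⋆⟫` below both by `f(X) - f(x⋆) + (μ/2)‖X - x⋆‖²` and,
since `∇f(x⋆) = 0`, by `μ‖X - x⋆‖²`, while `‖a + b + c‖² ≤ 3(‖a‖² + ‖b‖² + ‖c‖²)` bounds `E`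
above by the same quantities; the combination of the two lower bounds with weights `1/4` and
`3/4` absorbs `(√μ/4)E`.
-/

open scoped RealInnerProductSpace

theorem norm_add₃_sq_le {E : Type*} [SeminormedAddCommGroup E] (a b c : E) :
    ‖a + b + c‖ ^ 2 ≤ 3 * (‖a‖ ^ 2 + ‖b‖ ^ 2 + ‖c‖ ^ 2) := by
  nlinarith [norm_add₃_le (a := a) (b := b) (c := c), norm_nonneg (a + b + c),
    sq_nonneg (‖a‖ - ‖b‖), sq_nonneg (‖b‖ - ‖c‖), sq_nonneg (‖a‖ - ‖c‖)]

variable {E : Type*} [NormedAddCommGroup E] [InnerProductSpace ℝ E]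

theorem IsLocalMin.hasGradientAt_eq_zero [CompleteSpace E] {f : E → ℝ} {a g : E}
    (h : IsLocalMin f a) (hf : HasGradientAt f g a) : g = 0 := by
  simpa using congrArg (fun φ : E →L[ℝ] ℝ => φ g) (h.hasFDerivAt_eq_zero hf.hasFDerivAt)

theorem HasGradientAt.comp_hasDerivAt [CompleteSpace E] {f : E → ℝ} {X : ℝ → E} {g v : E}
    {t : ℝ} (hf : HasGradientAt f g (X t)) (hX : HasDerivAt X v t) :
    HasDerivAt (fun u => f (X u)) ⟪g, v⟫ t := by
  have h := hf.hasFDerivAt.comp_hasDerivAt t hX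
  simp only [InnerProductSpace.toDual_apply_apply] at h
  exact h

section StrongConvexity

variable {f : E → ℝ} {g : E → E} {μ : ℝ}

theorem sub_add_le_inner_of_strongConvex
    (hsconv : ∀ a b, f b ≥ f a + ⟪g a, b - a⟫ + μ / 2 * ‖b - a‖ ^ 2) (x y : E) :
    f x - f y + μ / 2 * ‖x - y‖ ^ 2 ≤ ⟪g x, x - y⟫ := by
  have h := hsconv x y
  rw [norm_sub_rev, ← neg_sub x y, inner_neg_right] at h
  linarith

theorem mul_sq_le_inner_sub_of_strongConvex
    (hsconv : ∀ a b, f b ≥ f a + ⟪g a, b - a⟫ + μ / 2 * ‖b - a‖ ^ 2) (x y : E) :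
    μ * ‖x - y‖ ^ 2 ≤ ⟪g x - g y, x - y⟫ := by
  have hx := sub_add_le_inner_of_strongConvex hsconv x y
  have hy := sub_add_le_inner_of_strongConvex hsconv y x
  rw [norm_sub_rev, ← neg_sub x y, inner_neg_right] at hy
  rw [inner_sub_left]
  linarith

end StrongConvexity

/-- `m` and `r` stand for `√μ` and `√s`. -/
noncomputable def nagScEnergy (f : E → ℝ) (g : E → E) (m r : ℝ) (xstar x v : E) : ℝ :=
  (1 + m * r) * (f x - f xstar) + 1 / 4 * ‖v‖ ^ 2
    + 1 / 4 * ‖v + (2 * m) • (x - xstar) + r • g x‖ ^ 2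

theorem nagScEnergy_le (f : E → ℝ) (g : E → E) (m r : ℝ) (xstar x v : E) :
    nagScEnergy f g m r xstar x v ≤ (1 + m * r) * (f x - f xstar) + ‖v‖ ^ 2
      + 3 * m ^ 2 * ‖x - xstar‖ ^ 2 + 3 / 4 * r ^ 2 * ‖g x‖ ^ 2 := by
  have h := norm_add₃_sq_le v ((2 * m) • (x - xstar)) (r • g x)
  simp only [norm_smul, mul_pow, Real.norm_eq_abs, sq_abs] at h
  unfold nagScEnergy
  linarith

theorem hasDerivAt_nagScEnergy [CompleteSpace E] {f : E → ℝ} {g : E → E} {H : E →L[ℝ] E}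
    {X X' : ℝ → E} {a : E} {t : ℝ} (m r : ℝ) (xstar : E)
    (hf : HasGradientAt f (g (X t)) (X t)) (hg : HasFDerivAt g H (X t))
    (hX : HasDerivAt X (X' t) t) (hX' : HasDerivAt X' a t) :
    HasDerivAt (fun u => nagScEnergy f g m r xstar (X u) (X' u))
      ((1 + m * r) * ⟪g (X t), X' t⟫ + 1 / 2 * ⟪X' t, a⟫
        + 1 / 2 * ⟪X' t + (2 * m) • (X t - xstar) + r • g (X t),
            a + (2 * m) • X' t + r • H (X' t)⟫) t := by
  have hw : HasDerivAt (fun u => X' u + (2 * m) • (X u - xstar) + r • g (X u))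
      (a + (2 * m) • X' t + r • H (X' t)) t :=
    (hX'.add ((hX.sub_const xstar).const_smul (2 * m))).add
      ((hg.comp_hasDerivAt t hX).const_smul r)
  refine ((((hf.comp_hasDerivAt hX).sub_const (f xstar)).const_mul (1 + m * r)).add
    (hX'.norm_sq.const_mul (1 / 4))).add (hw.norm_sq.const_mul (1 / 4)) |>.congr_deriv ?_
  ring

theorem nagScEnergy_deriv_eq_of_ode {m r : ℝ} {v a h y p : E}
    (hode : a + (2 * m) • v + r • h + (1 + m * r) • y = 0) :
    (1 + m * r) * ⟪y, v⟫ + 1 / 2 * ⟪v, a⟫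
        + 1 / 2 * ⟪v + (2 * m) • p + r • y, a + (2 * m) • v + r • h⟫
      = -(m * ‖v‖ ^ 2) - r / 2 * ⟪v, h⟫ - (1 + m * r) * m * ⟪y, p⟫
        - (1 + m * r) * (r / 2) * ‖y‖ ^ 2 := by
  rw [eq_neg_of_add_eq_zero_left hode,
    eq_neg_of_add_eq_zero_left (show a + ((2 * m) • v + r • h + (1 + m * r) • y) = 0 by
      rw [← hode]; abel)]
  simp only [inner_add_left, inner_add_right, inner_neg_right,
    real_inner_smul_left, real_inner_smul_right, real_inner_self_eq_norm_sq,
    real_inner_comm v y, real_inner_comm p y]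
  ring

theorem mul_nagScEnergy_le {f : E → ℝ} {g : E → E} {m r : ℝ} (hm : 0 ≤ m) (hr : 0 ≤ r)
    (hsconv : ∀ a b, f b ≥ f a + ⟪g a, b - a⟫ + m ^ 2 / 2 * ‖b - a‖ ^ 2)
    {xstar : E} (hstar : g xstar = 0) (x v : E) :
    m / 4 * nagScEnergy f g m r xstar x v
      ≤ m * ‖v‖ ^ 2 + (1 + m * r) * m * ⟪g x, x - xstar⟫ + m * r ^ 2 / 2 * ‖g x‖ ^ 2 := by
  have hE := mul_le_mul_of_nonneg_left (nagScEnergy_le f g m r xstar x v) hm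
  have hmr : 0 ≤ (1 + m * r) * m := by positivity
  have hgap := mul_le_mul_of_nonneg_left (sub_add_le_inner_of_strongConvex hsconv x xstar) hmr
  have hmono := mul_sq_le_inner_sub_of_strongConvex hsconv x xstar
  rw [hstar, sub_zero] at hmono
  replace hmono := mul_le_mul_of_nonneg_left hmono hmr
  have hd := sq_nonneg ‖x - xstar‖
  linear_combination (1 / 4) * hE + (1 / 4) * hgap + (3 / 4) * hmono
    + (3 / 4) * mul_nonneg hm (sq_nonneg ‖v‖)
    + (5 / 16) * mul_nonneg (mul_nonneg hm (sq_nonneg r)) (sq_nonneg ‖g x‖)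
    + (1 / 8) * mul_nonneg (pow_nonneg hm 3) hd
    + (7 / 8) * mul_nonneg (mul_nonneg (pow_nonneg hm 4) hr) hd

theorem nag_sc_ode_lyapunov_decrease_general {n : ℕ}
    (f : EuclideanSpace ℝ (Fin n) → ℝ)
    (g : EuclideanSpace ℝ (Fin n) → EuclideanSpace ℝ (Fin n))
    (H : EuclideanSpace ℝ (Fin n) → EuclideanSpace ℝ (Fin n) →L[ℝ] EuclideanSpace ℝ (Fin n))
    (μ L s : ℝ) (hμ : 0 < μ)
    (hgrad : ∀ x, HasGradientAt f (g x) x)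
    (hhess : ∀ x, HasFDerivAt g (H x) x)
    (hsconv : ∀ a b, f b ≥ f a + ⟪g a, b - a⟫ + μ / 2 * ‖b - a‖ ^ 2)
    (xstar : EuclideanSpace ℝ (Fin n)) (hmin : ∀ z, f xstar ≤ f z)
    (X X' X'' : ℝ → EuclideanSpace ℝ (Fin n))
    (hX' : ∀ t, HasDerivAt X (X' t) t)
    (hX'' : ∀ t, HasDerivAt X' (X'' t) t)
    (hode : ∀ t, 0 ≤ t →
      X'' t + (2 * Real.sqrt μ) • X' t + Real.sqrt s • (H (X t)) (X' t)
        + (1 + Real.sqrt (μ * s)) • g (X t) = 0) :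
    ∀ t, 0 ≤ t →
      deriv (fun u => (1 + Real.sqrt (μ * s)) * (f (X u) - f xstar)
          + (1/4) * ‖X' u‖ ^ 2
          + (1/4) * ‖X' u + (2 * Real.sqrt μ) • (X u - xstar) + Real.sqrt s • g (X u)‖ ^ 2) t
        ≤ -(Real.sqrt μ / 4) *
            ((1 + Real.sqrt (μ * s)) * (f (X t) - f xstar)
              + (1/4) * ‖X' t‖ ^ 2
              + (1/4) * ‖X' t + (2 * Real.sqrt μ) • (X t - xstar) + Real.sqrt s • g (X t)‖ ^ 2)
          - (Real.sqrt s / 2) * (‖g (X t)‖ ^ 2 + ⟪X' t, (H (X t)) (X' t)⟫) := by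
  intro t ht
  have hsqrt : Real.sqrt (μ * s) = Real.sqrt μ * Real.sqrt s := Real.sqrt_mul hμ.le s
  rw [← Real.sq_sqrt hμ.le] at hsconv
  have hstar : g xstar = 0 :=
    IsLocalMin.hasGradientAt_eq_zero (Filter.Eventually.of_forall hmin) (hgrad xstar)
  have hderiv := (hasDerivAt_nagScEnergy (Real.sqrt μ) (Real.sqrt s) xstar (hgrad (X t))
    (hhess (X t)) (hX' t) (hX'' t)).deriv.trans
    (nagScEnergy_deriv_eq_of_ode (p := X t - xstar) (hsqrt ▸ hode t ht))
  have hdecay := mul_nagScEnergy_le (Real.sqrt_nonneg μ) (Real.sqrt_nonneg s) hsconv hstar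
    (X t) (X' t)
  unfold nagScEnergy at hderiv hdecay
  rw [hsqrt, hderiv]
  linear_combination hdecay

/-- Continuous Lyapunov decrease for the high-resolution ODE of NAG-SC. -/
theorem nag_sc_ode_lyapunov_decrease {n : ℕ}
    (f : EuclideanSpace ℝ (Fin n) → ℝ)
    (g : EuclideanSpace ℝ (Fin n) → EuclideanSpace ℝ (Fin n))
    (H : EuclideanSpace ℝ (Fin n) → EuclideanSpace ℝ (Fin n) →L[ℝ] EuclideanSpace ℝ (Fin n))
    (μ L s : ℝ) (hμ : 0 < μ) (hμL : μ ≤ L) (hs : 0 < s)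
    (hgrad : ∀ x, HasGradientAt f (g x) x)
    (hhess : ∀ x, HasFDerivAt g (H x) x)
    (hsconv : ∀ a b, f b ≥ f a + ⟪g a, b - a⟫ + μ / 2 * ‖b - a‖ ^ 2)
    (hlip : ∀ a b, ‖g a - g b‖ ≤ L * ‖a - b‖)
    (xstar : EuclideanSpace ℝ (Fin n)) (hmin : ∀ z, f xstar ≤ f z)
    (X X' X'' : ℝ → EuclideanSpace ℝ (Fin n))
    (hX' : ∀ t, HasDerivAt X (X' t) t)
    (hX'' : ∀ t, HasDerivAt X' (X'' t) t)
    (hode : ∀ t, 0 ≤ t →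
      X'' t + (2 * Real.sqrt μ) • X' t + Real.sqrt s • (H (X t)) (X' t)
        + (1 + Real.sqrt (μ * s)) • g (X t) = 0) :
    ∀ t, 0 ≤ t →
      deriv (fun u => (1 + Real.sqrt (μ * s)) * (f (X u) - f xstar)
          + (1/4) * ‖X' u‖ ^ 2
          + (1/4) * ‖X' u + (2 * Real.sqrt μ) • (X u - xstar) + Real.sqrt s • g (X u)‖ ^ 2) t
        ≤ -(Real.sqrt μ / 4) *
            ((1 + Real.sqrt (μ * s)) * (f (X t) - f xstar)
              + (1/4) * ‖X' t‖ ^ 2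
              + (1/4) * ‖X' t + (2 * Real.sqrt μ) • (X t - xstar) + Real.sqrt s • g (X t)‖ ^ 2)
          - (Real.sqrt s / 2) * (‖g (X t)‖ ^ 2 + ⟪X' t, (H (X t)) (X' t)⟫) :=
  nag_sc_ode_lyapunov_decrease_general f g H μ L s hμ hgrad hhess hsconv xstar hmin X X' X'' hX'
    hX'' hode
end

section
/- Let f : ℝⁿ → ℝ be μ-strongly convex and L-smooth, 0 < μ ≤ L, s > 0, with minimizer x⋆. Let (x_k, v_k) satisfy the heavy-ball phase-space recursion x_{k+1} = x_k + √s·v_k, v_{k+1} = v_k - (2√(μs)/(1-√(μs)))v_{k+1} - ((1+√(μs))/(1-√(μs)))√s∇f(x_{k+1}). Define E(k) = ((1+√(μs))/(1-√(μs)))(f(x_k) - f(x⋆)) + (1/4)‖v_k‖² + (1/4)‖v_k + (2√μ/(1-√(μs)))(x_{k+1} - x⋆)‖². Then for all k ≥ 0, E(k+1) - E(k) ≤ -√(μs)·min{(1-√(μs))/(1+√(μs)), 1/4}·E(k+1) - [(3√(μs)/4)·((1+√(μs))/(1-√(μs)))(f(x_{k+1}) - f(x⋆)) - (s/2)((1+√(μs))/(1-√(μs)))²‖∇f(x_{k+1})‖²].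 -/
/-!
Put `a = √(μs)`, `c = (1 + a)/(1 - a)` and `β = 2√μ/(1 - a)`, so that `c = 1 + β√s`. The implicit
velocity update solves to `v_k = c v_{k+1} + c√s ∇f(x_{k+1})`, and `u_k = v_k + β (x_{k+1} - x⋆)`
satisfies `u_{k+1} = u_k - c√s ∇f(x_{k+1})`. Expanding the squares and bounding
`f(x_{k+1}) - f(x_k)` by convexity, the cross terms `⟨∇f(x_{k+1}), v_{k+1}⟩` cancel and
`E(k+1) - E(k) ≤ (c²s/2)‖∇f(x_{k+1})‖² - ((c² - 1)/4)‖v_{k+1}‖²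
  - (c(c - 1)/2)⟨∇f(x_{k+1}), x_{k+1} - x⋆⟩`.
Strong convexity bounds the inner product below by `f(x_{k+1}) - f(x⋆) + (μ/2)‖x_{k+1} - x⋆‖²`, while
`E(k+1) ≤ c (f(x_{k+1}) - f(x⋆)) + (1/4 + c²/2)‖v_{k+1}‖² + (β²/2)‖x_{k+1} - x⋆‖²`; the claim then
follows by comparing the coefficients of these three nonnegative quantities one at a time. The
gradient term `(c²s/2)‖∇f(x_{k+1})‖²` survives unchanged and is the one in the extra bracket.
-/

open scoped RealInnerProductSpace

theorem norm_add_sq_le_two_mul {E : Type*} [SeminormedAddCommGroup E] (x y : E) :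
    ‖x + y‖ ^ 2 ≤ 2 * (‖x‖ ^ 2 + ‖y‖ ^ 2) :=
  (pow_le_pow_left₀ (norm_nonneg _) (norm_add_le x y) 2).trans add_sq_le

section HeavyBall

variable {E : Type*} [NormedAddCommGroup E] [InnerProductSpace ℝ E]

theorem sub_add_half_mul_norm_sq_le_inner {f : E → ℝ} {g : E → E} {μ : ℝ}
    (hsconv : ∀ a b, f b ≥ f a + ⟪g a, b - a⟫ + μ / 2 * ‖b - a‖ ^ 2) (x y : E) :
    f x - f y + μ / 2 * ‖x - y‖ ^ 2 ≤ ⟪g x, x - y⟫ := by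
  have h := hsconv x y
  rw [← neg_sub x y, inner_neg_right, norm_neg] at h
  linarith

/-- `heavyBallEnergy f xstar c β x_k x_{k+1} v_k` is the Lyapunov function `E(k)`. -/
noncomputable def heavyBallEnergy (f : E → ℝ) (xstar : E) (c β : ℝ) (x x' v : E) : ℝ :=
  c * (f x - f xstar) + (1/4) * ‖v‖ ^ 2 + (1/4) * ‖v + β • (x' - xstar)‖ ^ 2

theorem heavyBallEnergy_sub_le {f : E → ℝ} {g : E → E}
    (hconv : ∀ a b, f a + ⟪g a, b - a⟫ ≤ f b) {c β t : ℝ} (hc : c = 1 + β * t) (hc0 : 0 ≤ c)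
    {xstar x₀ x₁ x₂ v₀ v₁ : E} (hx₁ : x₁ = x₀ + t • v₀) (hx₂ : x₂ = x₁ + t • v₁)
    (hv₀ : v₀ = c • v₁ + (c * t) • g x₁) :
    heavyBallEnergy f xstar c β x₁ x₂ v₁ - heavyBallEnergy f xstar c β x₀ x₁ v₀ ≤
      c ^ 2 * t ^ 2 / 2 * ‖g x₁‖ ^ 2 - (c ^ 2 - 1) / 4 * ‖v₁‖ ^ 2
        - c * (c - 1) / 2 * ⟪g x₁, x₁ - xstar⟫ := by
  have hdesc : f x₁ - f x₀ ≤ t * ⟪g x₁, v₀⟫ := by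
    have h := hconv x₁ x₀
    rw [show x₀ - x₁ = -(t • v₀) by rw [hx₁]; abel, inner_neg_right,
      real_inner_smul_right] at h
    linarith
  have hdesc' := mul_le_mul_of_nonneg_left hdesc hc0
  have hx₂' : x₂ - xstar = (x₁ - xstar) + t • v₁ := by rw [hx₂]; abel
  unfold heavyBallEnergy
  rw [hx₂', hv₀] at *
  generalize g x₁ = G at *
  generalize x₁ - xstar = z at *
  subst hc
  simp only [← real_inner_self_eq_norm_sq, inner_add_left, inner_add_right,
    real_inner_smul_right, real_inner_comm] at hdesc' ⊢
  linarith

theorem heavyBallEnergy_le {f : E → ℝ} {c β t : ℝ} (hc : c = 1 + β * t) {xstar x x' v : E}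
    (hx' : x' = x + t • v) :
    heavyBallEnergy f xstar c β x x' v ≤
      c * (f x - f xstar) + (1 / 4 + c ^ 2 / 2) * ‖v‖ ^ 2 + β ^ 2 / 2 * ‖x - xstar‖ ^ 2 := by
  have hsum : v + β • (x' - xstar) = c • v + β • (x - xstar) := by rw [hx', hc]; module
  have h := norm_add_sq_le_two_mul (c • v) (β • (x - xstar))
  rw [norm_smul, norm_smul, mul_pow, mul_pow, Real.norm_eq_abs, Real.norm_eq_abs, sq_abs,
    sq_abs] at h
  unfold heavyBallEnergy
  rw [hsum]
  linarith

end HeavyBall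

theorem heavyBall_decrease_of_bounds {a c β μ s m ΔE E₁ F V D P G : ℝ}
    (ha : 0 ≤ a) (ha1 : a < 1) (hc : c = (1 + a) / (1 - a)) (hβ : β ^ 2 = 4 * μ / (1 - a) ^ 2)
    (hμ : 0 ≤ μ) (hm0 : 0 ≤ m) (hm4 : m ≤ 1 / 4) (hmc : m ≤ (1 - a) / (1 + a))
    (hF : 0 ≤ F) (hV : 0 ≤ V) (hD : 0 ≤ D)
    (hstep : ΔE ≤ c ^ 2 * s / 2 * G - (c ^ 2 - 1) / 4 * V - c * (c - 1) / 2 * P)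
    (hP : F + μ / 2 * D ≤ P)
    (hE₁ : E₁ ≤ c * F + (1 / 4 + c ^ 2 / 2) * V + β ^ 2 / 2 * D) :
    ΔE ≤ -a * m * E₁ - (3 * a / 4 * c * F - s / 2 * c ^ 2 * G) := by
  have h1a : 0 < 1 - a := by linarith
  have hc0 : 0 ≤ c := by rw [hc]; positivity
  have hc1 : c - 1 = 2 * a / (1 - a) := by rw [hc]; field_simp; ring
  have hmc' : m * c ≤ 1 := by
    rw [hc, ← le_div_iff₀ (by positivity), one_div_div]; exact hmc
  have hFc : a * m * c + 3 * a / 4 * c ≤ c * (c - 1) / 2 := by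
    have : a * (m + 3 / 4) ≤ a / (1 - a) := by
      rw [le_div_iff₀ h1a]
      nlinarith [mul_nonneg ha (mul_nonneg h1a.le (by linarith : 0 ≤ 1 / 4 - m))]
    calc a * m * c + 3 * a / 4 * c = c * (a * (m + 3 / 4)) := by ring
      _ ≤ c * (a / (1 - a)) := by gcongr
      _ = c * (c - 1) / 2 := by rw [hc1]; ring
  have hVc : a * m * (1 / 4 + c ^ 2 / 2) ≤ (c ^ 2 - 1) / 4 := by
    have hcoef : a * (1 / 16 + c / 2) ≤ (c ^ 2 - 1) / 4 := by
      rw [show (c ^ 2 - 1) / 4 = a * (1 / (1 - a) ^ 2) by rw [hc]; field_simp; ring]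
      gcongr
      rw [hc, le_div_iff₀ (by positivity)]
      field_simp
      nlinarith
    nlinarith [mul_le_mul_of_nonneg_left hmc' (by positivity : 0 ≤ a * c / 2),
      mul_le_mul_of_nonneg_left hm4 ha]
  have hDc : a * m * (β ^ 2 / 2) ≤ c * (c - 1) / 2 * (μ / 2) := by
    rw [hβ, hc1, hc]
    calc _ = a * μ / (1 - a) / (1 - a) * (2 * m) := by field_simp; ring
      _ ≤ a * μ / (1 - a) / (1 - a) * ((1 + a) / 2) := by gcongr; linarith
      _ = _ := by ring
  have hcc : 0 ≤ c * (c - 1) / 2 := by rw [hc1]; positivity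
  nlinarith [mul_le_mul_of_nonneg_right hFc hF, mul_le_mul_of_nonneg_right hVc hV,
    mul_le_mul_of_nonneg_right hDc hD, mul_le_mul_of_nonneg_left hP hcc,
    mul_le_mul_of_nonneg_left hE₁ (mul_nonneg ha hm0)]

theorem heavy_ball_lyapunov_decrease_general {n : ℕ}
    (f : EuclideanSpace ℝ (Fin n) → ℝ)
    (g : EuclideanSpace ℝ (Fin n) → EuclideanSpace ℝ (Fin n))
    (μ s : ℝ) (hμ : 0 < μ) (hs : 0 < s)
    (hms : Real.sqrt (μ * s) < 1)
    (hsconv : ∀ a b, f b ≥ f a + ⟪g a, b - a⟫ + μ / 2 * ‖b - a‖ ^ 2)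
    (xstar : EuclideanSpace ℝ (Fin n)) (hmin : ∀ z, f xstar ≤ f z)
    (x v : ℕ → EuclideanSpace ℝ (Fin n))
    (hx : ∀ k : ℕ, x (k + 1) = x k + Real.sqrt s • v k)
    (hv : ∀ k : ℕ, v (k + 1) = v k
          - (2 * Real.sqrt (μ * s) / (1 - Real.sqrt (μ * s))) • v (k + 1)
          - (((1 + Real.sqrt (μ * s)) / (1 - Real.sqrt (μ * s))) * Real.sqrt s) • g (x (k + 1))) :
    ∀ k : ℕ,
      (((1 + Real.sqrt (μ * s)) / (1 - Real.sqrt (μ * s))) * (f (x (k + 1)) - f xstar)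
        + (1/4) * ‖v (k + 1)‖ ^ 2
        + (1/4) * ‖v (k + 1)
            + (2 * Real.sqrt μ / (1 - Real.sqrt (μ * s))) • (x (k + 2) - xstar)‖ ^ 2)
      - (((1 + Real.sqrt (μ * s)) / (1 - Real.sqrt (μ * s))) * (f (x k) - f xstar)
        + (1/4) * ‖v k‖ ^ 2
        + (1/4) * ‖v k
            + (2 * Real.sqrt μ / (1 - Real.sqrt (μ * s))) • (x (k + 1) - xstar)‖ ^ 2)
      ≤ -(Real.sqrt (μ * s)) *
            min ((1 - Real.sqrt (μ * s)) / (1 + Real.sqrt (μ * s))) (1/4) *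
            (((1 + Real.sqrt (μ * s)) / (1 - Real.sqrt (μ * s))) * (f (x (k + 1)) - f xstar)
              + (1/4) * ‖v (k + 1)‖ ^ 2
              + (1/4) * ‖v (k + 1)
                  + (2 * Real.sqrt μ / (1 - Real.sqrt (μ * s))) • (x (k + 2) - xstar)‖ ^ 2)
        - ((3 * Real.sqrt (μ * s) / 4) * ((1 + Real.sqrt (μ * s)) / (1 - Real.sqrt (μ * s)))
              * (f (x (k + 1)) - f xstar)
            - (s / 2) * ((1 + Real.sqrt (μ * s)) / (1 - Real.sqrt (μ * s))) ^ 2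
              * ‖g (x (k + 1))‖ ^ 2) := by
  intro k
  set a := Real.sqrt (μ * s)
  set c := (1 + a) / (1 - a) with hc
  set β := 2 * Real.sqrt μ / (1 - a) with hβ
  have h1a : 0 < 1 - a := by linarith
  have hcβ : c = 1 + β * Real.sqrt s := by
    rw [hc, hβ, div_mul_eq_mul_div, mul_assoc, ← Real.sqrt_mul hμ.le]
    field_simp
    ring
  have hβ2 : β ^ 2 = 4 * μ / (1 - a) ^ 2 := by
    rw [hβ, div_pow, mul_pow, Real.sq_sqrt hμ.le]
    norm_num
  have hv₀ : v k = (1 + 2 * a / (1 - a)) • v (k + 1) + (c * Real.sqrt s) • g (x (k + 1)) := by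
    linear_combination (norm := module) -(hv k)
  rw [show 1 + 2 * a / (1 - a) = c by rw [hc]; field_simp; ring] at hv₀
  have hstep := heavyBallEnergy_sub_le (xstar := xstar)
    (fun y z ↦ (le_add_of_nonneg_right (by positivity)).trans (hsconv y z))
    hcβ (by positivity) (hx k) (hx (k + 1)) hv₀
  rw [Real.sq_sqrt hs.le] at hstep
  exact heavyBall_decrease_of_bounds (Real.sqrt_nonneg _) hms hc hβ2 hμ.le
    (le_min (by positivity) (by norm_num)) (min_le_right _ _) (min_le_left _ _)
    (sub_nonneg.2 (hmin _)) (sq_nonneg _) (sq_nonneg _) hstep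
    (sub_add_half_mul_norm_sq_le_inner hsconv _ _) (heavyBallEnergy_le hcβ (hx (k + 1)))

/-- Discrete Lyapunov decrease lemma for Polyak's heavy-ball method. -/
theorem heavy_ball_lyapunov_decrease {n : ℕ}
    (f : EuclideanSpace ℝ (Fin n) → ℝ)
    (g : EuclideanSpace ℝ (Fin n) → EuclideanSpace ℝ (Fin n))
    (μ L s : ℝ) (hμ : 0 < μ) (hμL : μ ≤ L) (hs : 0 < s)
    (hms : Real.sqrt (μ * s) < 1)
    (hgrad : ∀ x, HasGradientAt f (g x) x)
    (hsconv : ∀ a b, f b ≥ f a + ⟪g a, b - a⟫ + μ / 2 * ‖b - a‖ ^ 2)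
    (hlip : ∀ a b, ‖g a - g b‖ ≤ L * ‖a - b‖)
    (xstar : EuclideanSpace ℝ (Fin n)) (hmin : ∀ z, f xstar ≤ f z)
    (x v : ℕ → EuclideanSpace ℝ (Fin n))
    (hx : ∀ k : ℕ, x (k + 1) = x k + Real.sqrt s • v k)
    (hv : ∀ k : ℕ, v (k + 1) = v k
          - (2 * Real.sqrt (μ * s) / (1 - Real.sqrt (μ * s))) • v (k + 1)
          - (((1 + Real.sqrt (μ * s)) / (1 - Real.sqrt (μ * s))) * Real.sqrt s) • g (x (k + 1))) :
    ∀ k : ℕ,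
      (((1 + Real.sqrt (μ * s)) / (1 - Real.sqrt (μ * s))) * (f (x (k + 1)) - f xstar)
        + (1/4) * ‖v (k + 1)‖ ^ 2
        + (1/4) * ‖v (k + 1)
            + (2 * Real.sqrt μ / (1 - Real.sqrt (μ * s))) • (x (k + 2) - xstar)‖ ^ 2)
      - (((1 + Real.sqrt (μ * s)) / (1 - Real.sqrt (μ * s))) * (f (x k) - f xstar)
        + (1/4) * ‖v k‖ ^ 2
        + (1/4) * ‖v k
            + (2 * Real.sqrt μ / (1 - Real.sqrt (μ * s))) • (x (k + 1) - xstar)‖ ^ 2)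
      ≤ -(Real.sqrt (μ * s)) *
            min ((1 - Real.sqrt (μ * s)) / (1 + Real.sqrt (μ * s))) (1/4) *
            (((1 + Real.sqrt (μ * s)) / (1 - Real.sqrt (μ * s))) * (f (x (k + 1)) - f xstar)
              + (1/4) * ‖v (k + 1)‖ ^ 2
              + (1/4) * ‖v (k + 1)
                  + (2 * Real.sqrt μ / (1 - Real.sqrt (μ * s))) • (x (k + 2) - xstar)‖ ^ 2)
        - ((3 * Real.sqrt (μ * s) / 4) * ((1 + Real.sqrt (μ * s)) / (1 - Real.sqrt (μ * s)))
              * (f (x (k + 1)) - f xstar)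
            - (s / 2) * ((1 + Real.sqrt (μ * s)) / (1 - Real.sqrt (μ * s))) ^ 2
              * ‖g (x (k + 1))‖ ^ 2) :=
  heavy_ball_lyapunov_decrease_general f g μ s hμ hs hms hsconv xstar hmin x v hx hv
end
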